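/- arXiv:2107.04744 — 2 statements merged into one kernel-verified Lean document; each statement's English description precedes it below -/
import Mathlib

section
/- Let (v,u,θ) be a classical solution of the outer pressure problem on [0,1]×[0,T]. Define Y(t) = exp(∫₀ᵗ p(τ) dτ) and B(x,t) = exp(∫₀ˣ (u₀(y) − u(y,t)) dy). Then for every (x,t) ∈ [0,1]×[0,T] one has the representation v(x,t) = (v₀(x)/(B(x,t)·Y(t)))·(1 + (1/v₀(x))·∫₀ᵗ B(x,τ)·θ(x,τ)·Y(τ) dτ). -/
open MeasureTheory Set Filter

/-- The H¹(0,1) norm of a function `f` with (weak) derivative `f'`. -/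
noncomputable def H1norm (f f' : ℝ → ℝ) : ℝ :=
  Real.sqrt (∫ x in (0:ℝ)..1, ((f x) ^ 2 + (f' x) ^ 2))

/-- `p` is C¹ on `[0,∞)` with derivative `p'`, and `p` is positive there. -/
def PressureC1 (p p' : ℝ → ℝ) : Prop :=
  (∀ t ∈ Ici (0:ℝ), HasDerivWithinAt p (p' t) (Ici 0) t) ∧
  ContinuousOn p' (Ici 0) ∧ (∀ t ∈ Ici (0:ℝ), 0 < p t)

/-- Uniform pressure assumptions: `m ≤ p ≤ M` on `[0,∞)` and `∫₀^∞ |p'| ≤ I`. -/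
def UniformPressure (p p' : ℝ → ℝ) (m M I : ℝ) : Prop :=
  (∀ t ∈ Ici (0:ℝ), m ≤ p t ∧ p t ≤ M) ∧
  IntegrableOn (fun t => |p' t|) (Ici 0) ∧ (∫ t in Ici (0:ℝ), |p' t|) ≤ I

/-- `(E,δ)`-bounded initial data: the sum of the H¹ norms of `v₀, u₀, θ₀` is at most `E`
and `v₀ ≥ δ`, `θ₀ ≥ δ` on `[0,1]`.  (For a classical solution the spatial derivatives of
the initial data are `vx(·,0)`, `ux(·,0)`, `θx(·,0)`.) -/
def EdeltaBounded (E δ : ℝ) (v0 u0 θ0 : ℝ → ℝ) (vx ux θx : ℝ → ℝ → ℝ) : Prop :=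
  H1norm v0 (fun x => vx x 0) + H1norm u0 (fun x => ux x 0)
      + H1norm θ0 (fun x => θx x 0) ≤ E ∧
  (∀ x ∈ Icc (0:ℝ) 1, δ ≤ v0 x) ∧ (∀ x ∈ Icc (0:ℝ) 1, δ ≤ θ0 x)

/-- A classical solution `(v,u,θ)` of the outer pressure problem for the 1-D compressible
Navier–Stokes system on `[0,1] × Tset` (with `Tset = Icc 0 T` or `Tset = Ici 0`),
with heat conductivity `θ^β`, pressure boundary data `p`, and initial data `(v₀,u₀,θ₀)`.
The functions `vx, vt, ux, ut, uxx, θx, θt, θxx` are the corresponding partial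
derivatives. -/
structure OPSol (β : ℝ) (Tset : Set ℝ) (p v0 u0 θ0 : ℝ → ℝ)
    (v u θ vx vt ux ut uxx θx θt θxx : ℝ → ℝ → ℝ) : Prop where
  v_pos : ∀ x ∈ Icc (0:ℝ) 1, ∀ t ∈ Tset, 0 < v x t
  θ_pos : ∀ x ∈ Icc (0:ℝ) 1, ∀ t ∈ Tset, 0 < θ x t
  cont_v : ContinuousOn (fun q : ℝ × ℝ => v q.1 q.2) (Icc 0 1 ×ˢ Tset)
  cont_u : ContinuousOn (fun q : ℝ × ℝ => u q.1 q.2) (Icc 0 1 ×ˢ Tset)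
  cont_θ : ContinuousOn (fun q : ℝ × ℝ => θ q.1 q.2) (Icc 0 1 ×ˢ Tset)
  cont_vx : ContinuousOn (fun q : ℝ × ℝ => vx q.1 q.2) (Icc 0 1 ×ˢ Tset)
  cont_vt : ContinuousOn (fun q : ℝ × ℝ => vt q.1 q.2) (Icc 0 1 ×ˢ Tset)
  cont_ux : ContinuousOn (fun q : ℝ × ℝ => ux q.1 q.2) (Icc 0 1 ×ˢ Tset)
  cont_ut : ContinuousOn (fun q : ℝ × ℝ => ut q.1 q.2) (Icc 0 1 ×ˢ Tset)
  cont_uxx : ContinuousOn (fun q : ℝ × ℝ => uxx q.1 q.2) (Icc 0 1 ×ˢ Tset)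
  cont_θx : ContinuousOn (fun q : ℝ × ℝ => θx q.1 q.2) (Icc 0 1 ×ˢ Tset)
  cont_θt : ContinuousOn (fun q : ℝ × ℝ => θt q.1 q.2) (Icc 0 1 ×ˢ Tset)
  cont_θxx : ContinuousOn (fun q : ℝ × ℝ => θxx q.1 q.2) (Icc 0 1 ×ˢ Tset)
  hvx : ∀ t ∈ Tset, ∀ x ∈ Icc (0:ℝ) 1, HasDerivWithinAt (fun y => v y t) (vx x t) (Icc 0 1) x
  hvt : ∀ x ∈ Icc (0:ℝ) 1, ∀ t ∈ Tset, HasDerivWithinAt (fun s => v x s) (vt x t) Tset t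
  hux : ∀ t ∈ Tset, ∀ x ∈ Icc (0:ℝ) 1, HasDerivWithinAt (fun y => u y t) (ux x t) (Icc 0 1) x
  hut : ∀ x ∈ Icc (0:ℝ) 1, ∀ t ∈ Tset, HasDerivWithinAt (fun s => u x s) (ut x t) Tset t
  huxx : ∀ t ∈ Tset, ∀ x ∈ Icc (0:ℝ) 1, HasDerivWithinAt (fun y => ux y t) (uxx x t) (Icc 0 1) x
  hθx : ∀ t ∈ Tset, ∀ x ∈ Icc (0:ℝ) 1, HasDerivWithinAt (fun y => θ y t) (θx x t) (Icc 0 1) x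
  hθt : ∀ x ∈ Icc (0:ℝ) 1, ∀ t ∈ Tset, HasDerivWithinAt (fun s => θ x s) (θt x t) Tset t
  hθxx : ∀ t ∈ Tset, ∀ x ∈ Icc (0:ℝ) 1, HasDerivWithinAt (fun y => θx y t) (θxx x t) (Icc 0 1) x
  /-- (i)  v_t = u_x -/
  eq_mass : ∀ x ∈ Icc (0:ℝ) 1, ∀ t ∈ Tset, vt x t = ux x t
  /-- (ii)  u_t = ((u_x − θ)/v)_x -/
  eq_mom : ∀ t ∈ Tset, ∀ x ∈ Icc (0:ℝ) 1,
    HasDerivWithinAt (fun y => (ux y t - θ y t) / v y t) (ut x t) (Icc 0 1) x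
  /-- (iii)  θ_t + (θ/v) u_x = ((θ^β θ_x)/v)_x + u_x²/v -/
  eq_energy : ∀ t ∈ Tset, ∀ x ∈ Icc (0:ℝ) 1, ∃ q : ℝ,
    HasDerivWithinAt (fun y => θ y t ^ β * θx y t / v y t) q (Icc 0 1) x ∧
    θt x t + θ x t / v x t * ux x t = q + (ux x t) ^ 2 / v x t
  bc_left : ∀ t ∈ Tset, (ux 0 t - θ 0 t) / v 0 t = -p t
  bc_right : ∀ t ∈ Tset, (ux 1 t - θ 1 t) / v 1 t = -p t
  bc_θ_left : ∀ t ∈ Tset, θx 0 t = 0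
  bc_θ_right : ∀ t ∈ Tset, θx 1 t = 0
  init_v : ∀ x ∈ Icc (0:ℝ) 1, v x 0 = v0 x
  init_u : ∀ x ∈ Icc (0:ℝ) 1, u x 0 = u0 x
  init_θ : ∀ x ∈ Icc (0:ℝ) 1, θ x 0 = θ0 x
  v0_pos : ∃ c > 0, ∀ x ∈ Icc (0:ℝ) 1, c ≤ v0 x
  θ0_pos : ∃ c > 0, ∀ x ∈ Icc (0:ℝ) 1, c ≤ θ0 x
  u0_mean : (∫ x in (0:ℝ)..1, u0 x) = 0

/-! With the stress `σ = (u_x - θ)/v`, the momentum equation integrated over `[0,x] × [0,t]`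
(Fubini, and `σ(0,·) = -p` from the boundary condition) gives
`∫₀ˣ (u - u₀) dy = ∫₀ᵗ (σ(x,τ) + p(τ)) dτ`, that is `B(x,t) Y(t) = exp (-∫₀ᵗ σ(x,τ) dτ)`.
Since `v_t = u_x = σ v + θ`, this is an integrating factor for `v`:
`(exp (-∫₀ᵗ σ) v)_t = exp (-∫₀ᵗ σ) θ`, and integrating in time gives the formula. -/

lemma integral_eq_sub_of_hasDerivWithinAt_Icc {f f' : ℝ → ℝ} {a b t : ℝ} (ht : t ∈ Icc a b)
    (hf : ∀ s ∈ Icc a b, HasDerivWithinAt f (f' s) (Icc a b) s)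
    (hf' : ContinuousOn f' (Icc a b)) :
    ∫ s in a..t, f' s = f t - f a := by
  have hsub : Icc a t ⊆ Icc a b := Icc_subset_Icc le_rfl ht.2
  refine intervalIntegral.integral_eq_sub_of_hasDeriv_right_of_le ht.1
    (fun s hs => ((hf s (hsub hs)).continuousWithinAt).mono hsub) (fun s hs => ?_)
    ((hf'.mono hsub).intervalIntegrable_of_Icc ht.1)
  have hs' : Icc a b ∈ nhds s := Icc_mem_nhds hs.1 (hs.2.trans_le ht.2)
  exact ((hf s (hsub (Ioo_subset_Icc_self hs))).hasDerivAt hs').hasDerivWithinAt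

lemma hasDerivWithinAt_integral_Icc {f : ℝ → ℝ} {a b t : ℝ} (ht : t ∈ Icc a b)
    (hf : ContinuousOn f (Icc a b)) :
    HasDerivWithinAt (fun s => ∫ τ in a..s, f τ) (f t) (Icc a b) t :=
  haveI : Fact (t ∈ Icc a b) := ⟨ht⟩
  intervalIntegral.integral_hasDerivWithinAt_right
    ((hf.mono (Icc_subset_Icc le_rfl ht.2)).intervalIntegrable_of_Icc ht.1)
    ⟨Icc a b, self_mem_nhdsWithin, hf.aestronglyMeasurable measurableSet_Icc⟩ (hf t ht)

lemma intervalIntegral_intervalIntegral_swap_of_continuousOn {F : ℝ → ℝ → ℝ} {a b c d : ℝ}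
    (hF : ContinuousOn F.uncurry (uIcc a b ×ˢ uIcc c d)) :
    ∫ x in a..b, ∫ y in c..d, F x y = ∫ y in c..d, ∫ x in a..b, F x y :=
  intervalIntegral_intervalIntegral_swap <|
    (hF.integrableOn_compact (isCompact_uIcc.prod isCompact_uIcc)).mono_set
      (prod_mono uIoc_subset_uIcc uIoc_subset_uIcc)

noncomputable def stress (v ux θ : ℝ → ℝ → ℝ) (x t : ℝ) : ℝ := (ux x t - θ x t) / v x t

namespace OPSol

variable {β T : ℝ} {Tset : Set ℝ} {p v0 u0 θ0 : ℝ → ℝ}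
  {v u θ vx vt ux ut uxx θx θt θxx : ℝ → ℝ → ℝ}

lemma continuousOn_stress (sol : OPSol β Tset p v0 u0 θ0 v u θ vx vt ux ut uxx θx θt θxx) :
    ContinuousOn (stress v ux θ).uncurry (Icc 0 1 ×ˢ Tset) :=
  (sol.cont_ux.sub sol.cont_θ).div sol.cont_v fun q hq => (sol.v_pos q.1 hq.1 q.2 hq.2).ne'

lemma continuousOn_pressure
    (sol : OPSol β Tset p v0 u0 θ0 v u θ vx vt ux ut uxx θx θt θxx) :
    ContinuousOn p Tset := by
  have hσ := sol.continuousOn_stress.uncurry_left 0 (left_mem_Icc.2 zero_le_one)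
  refine hσ.neg.congr fun t ht => ?_
  change p t = -stress v ux θ 0 t
  rw [stress, sol.bc_left t ht, neg_neg]

lemma integral_ut_eq (sol : OPSol β (Icc 0 T) p v0 u0 θ0 v u θ vx vt ux ut uxx θx θt θxx)
    {x τ : ℝ} (hx : x ∈ Icc (0:ℝ) 1) (hτ : τ ∈ Icc 0 T) :
    ∫ y in (0:ℝ)..x, ut y τ = stress v ux θ x τ + p τ := by
  rw [integral_eq_sub_of_hasDerivWithinAt_Icc hx (sol.eq_mom τ hτ)
    (sol.cont_ut.uncurry_right τ hτ), sol.bc_left τ hτ, stress, sub_neg_eq_add]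

lemma integral_u_sub_u0 (sol : OPSol β (Icc 0 T) p v0 u0 θ0 v u θ vx vt ux ut uxx θx θt θxx)
    {x s : ℝ} (hx : x ∈ Icc (0:ℝ) 1) (hs : s ∈ Icc 0 T) :
    ∫ y in (0:ℝ)..x, (u y s - u0 y) = ∫ τ in (0:ℝ)..s, (stress v ux θ x τ + p τ) := by
  have hxsub : uIcc 0 x ⊆ Icc (0:ℝ) 1 := by
    rw [uIcc_of_le hx.1]; exact Icc_subset_Icc le_rfl hx.2
  have hssub : uIcc 0 s ⊆ Icc 0 T := by
    rw [uIcc_of_le hs.1]; exact Icc_subset_Icc le_rfl hs.2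
  calc ∫ y in (0:ℝ)..x, (u y s - u0 y)
      = ∫ y in (0:ℝ)..x, ∫ τ in (0:ℝ)..s, ut y τ :=
        intervalIntegral.integral_congr fun y hy => by
          rw [integral_eq_sub_of_hasDerivWithinAt_Icc hs (sol.hut y (hxsub hy))
            (sol.cont_ut.uncurry_left y (hxsub hy)), sol.init_u y (hxsub hy)]
    _ = ∫ τ in (0:ℝ)..s, ∫ y in (0:ℝ)..x, ut y τ :=
        intervalIntegral_intervalIntegral_swap_of_continuousOn
          (sol.cont_ut.mono (prod_mono hxsub hssub))
    _ = ∫ τ in (0:ℝ)..s, (stress v ux θ x τ + p τ) :=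
        intervalIntegral.integral_congr fun τ hτ => sol.integral_ut_eq hx (hssub hτ)

lemma exp_neg_integral_stress
    (sol : OPSol β (Icc 0 T) p v0 u0 θ0 v u θ vx vt ux ut uxx θx θt θxx)
    {x s : ℝ} (hx : x ∈ Icc (0:ℝ) 1) (hs : s ∈ Icc 0 T) :
    Real.exp (-∫ τ in (0:ℝ)..s, stress v ux θ x τ)
      = Real.exp (∫ y in (0:ℝ)..x, (u0 y - u y s)) * Real.exp (∫ τ in (0:ℝ)..s, p τ) := by
  have hssub : Icc 0 s ⊆ Icc 0 T := Icc_subset_Icc le_rfl hs.2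
  have hσ : IntervalIntegrable (stress v ux θ x) volume 0 s :=
    ((sol.continuousOn_stress.uncurry_left x hx).mono hssub).intervalIntegrable_of_Icc hs.1
  have hp : IntervalIntegrable p volume 0 s :=
    (sol.continuousOn_pressure.mono hssub).intervalIntegrable_of_Icc hs.1
  have hu : ∫ y in (0:ℝ)..x, (u0 y - u y s) = -∫ y in (0:ℝ)..x, (u y s - u0 y) := by
    rw [← intervalIntegral.integral_neg]; simp only [neg_sub]
  rw [← Real.exp_add, hu, sol.integral_u_sub_u0 hx hs, intervalIntegral.integral_add hσ hp]
  congr 1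
  ring

lemma hasDerivWithinAt_exp_mul_v
    (sol : OPSol β (Icc 0 T) p v0 u0 θ0 v u θ vx vt ux ut uxx θx θt θxx)
    {x s : ℝ} (hx : x ∈ Icc (0:ℝ) 1) (hs : s ∈ Icc 0 T) :
    HasDerivWithinAt (fun r => Real.exp (-∫ τ in (0:ℝ)..r, stress v ux θ x τ) * v x r)
      (Real.exp (-∫ τ in (0:ℝ)..s, stress v ux θ x τ) * θ x s) (Icc 0 T) s := by
  have hI := hasDerivWithinAt_integral_Icc hs (sol.continuousOn_stress.uncurry_left x hx)
  refine (hI.neg.exp.mul (sol.hvt x hx s hs)).congr_deriv ?_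
  have hv : v x s ≠ 0 := (sol.v_pos x hx s hs).ne'
  rw [sol.eq_mass x hx s hs, stress]
  simp only [Pi.neg_apply]
  field_simp
  ring

lemma exp_mul_v_eq (sol : OPSol β (Icc 0 T) p v0 u0 θ0 v u θ vx vt ux ut uxx θx θt θxx)
    {x t : ℝ} (hx : x ∈ Icc (0:ℝ) 1) (ht : t ∈ Icc 0 T) :
    Real.exp (-∫ τ in (0:ℝ)..t, stress v ux θ x τ) * v x t
      = v0 x + ∫ τ in (0:ℝ)..t, Real.exp (-∫ r in (0:ℝ)..τ, stress v ux θ x r) * θ x τ := by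
  have hσ := sol.continuousOn_stress.uncurry_left x hx
  have hI : ContinuousOn (fun s => ∫ r in (0:ℝ)..s, stress v ux θ x r) (Icc 0 T) :=
    fun s hs => (hasDerivWithinAt_integral_Icc hs hσ).continuousWithinAt
  rw [integral_eq_sub_of_hasDerivWithinAt_Icc ht (fun s hs => sol.hasDerivWithinAt_exp_mul_v hx hs)
    (hI.neg.rexp.mul (sol.cont_θ.uncurry_left x hx)), intervalIntegral.integral_same, neg_zero,
    Real.exp_zero, one_mul, sol.init_v x hx, add_sub_cancel]

end OPSol

theorem representation_of_v_general
    (β T : ℝ)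
    (p v0 u0 θ0 : ℝ → ℝ) (v u θ vx vt ux ut uxx θx θt θxx : ℝ → ℝ → ℝ)
    (sol : OPSol β (Icc 0 T) p v0 u0 θ0 v u θ vx vt ux ut uxx θx θt θxx) :
    ∀ x ∈ Icc (0:ℝ) 1, ∀ t ∈ Icc (0:ℝ) T,
      v x t = v0 x /
          (Real.exp (∫ y in (0:ℝ)..x, (u0 y - u y t)) * Real.exp (∫ τ in (0:ℝ)..t, p τ)) *
        (1 + (1 / v0 x) * ∫ τ in (0:ℝ)..t,
          Real.exp (∫ y in (0:ℝ)..x, (u0 y - u y τ)) * θ x τ *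
            Real.exp (∫ s in (0:ℝ)..τ, p s)) := by
  intro x hx t ht
  have hv0 : v0 x ≠ 0 := by
    rw [← sol.init_v x hx]; exact (sol.v_pos x hx 0 ⟨le_rfl, ht.1.trans ht.2⟩).ne'
  have hJ : ∫ τ in (0:ℝ)..t, Real.exp (∫ y in (0:ℝ)..x, (u0 y - u y τ)) * θ x τ *
        Real.exp (∫ s in (0:ℝ)..τ, p s)
      = ∫ τ in (0:ℝ)..t, Real.exp (-∫ r in (0:ℝ)..τ, stress v ux θ x r) * θ x τ := by
    refine intervalIntegral.integral_congr fun τ hτ => ?_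
    rw [uIcc_of_le ht.1] at hτ
    rw [sol.exp_neg_integral_stress hx (Icc_subset_Icc le_rfl ht.2 hτ)]
    ring
  have hv := sol.exp_mul_v_eq hx ht
  rw [hJ, ← sol.exp_neg_integral_stress hx ht]
  field_simp
  linear_combination hv

/-- representation formula for the specific volume `v`. -/
theorem representation_of_v
    (β T : ℝ) (hβ : 0 < β) (hT : 0 < T)
    (p p' v0 u0 θ0 : ℝ → ℝ) (v u θ vx vt ux ut uxx θx θt θxx : ℝ → ℝ → ℝ)
    (hp : PressureC1 p p')
    (sol : OPSol β (Icc 0 T) p v0 u0 θ0 v u θ vx vt ux ut uxx θx θt θxx) :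
    ∀ x ∈ Icc (0:ℝ) 1, ∀ t ∈ Icc (0:ℝ) T,
      v x t = v0 x /
          (Real.exp (∫ y in (0:ℝ)..x, (u0 y - u y t)) * Real.exp (∫ τ in (0:ℝ)..t, p τ)) *
        (1 + (1 / v0 x) * ∫ τ in (0:ℝ)..t,
          Real.exp (∫ y in (0:ℝ)..x, (u0 y - u y τ)) * θ x τ *
            Real.exp (∫ s in (0:ℝ)..τ, p s)) :=
  representation_of_v_general β T p v0 u0 θ0 v u θ vx vt ux ut uxx θx θt θxx sol
end

section
/- Let β ≥ 0, let θ : [0,1] → (0,∞) be continuously differentiable, let v : [0,1] → (0,∞) be continuous, and set θ̄ = ∫₀¹ θ(x) dx. Then max_{x∈[0,1]} |θ(x)^{(β+1)/2} − θ̄^{(β+1)/2}| ≤ ((β+1)/2) · (∫₀¹ θ(x)^{β−2} θ'(x)² / v(x) dx)^{1/2} · (∫₀¹ θ(x) v(x) dx)^{1/2}. -/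
/-!
The mean value theorem for integrals gives a point `c` with `θ c = θ̄`, so
`θ x ^ e - θ̄ ^ e = ∫_c^x (θ ^ e)'` with `e = (β + 1) / 2`. Writing
`|(θ ^ e)'| = e * √((θ ^ (β - 2) * θ' ^ 2 / v) * (θ * v))` and applying the Cauchy–Schwarz
inequality in the form `∫ √(f g) ≤ √(∫ f) √(∫ g)` gives the bound.
-/

open MeasureTheory Set Filter

theorem integral_sqrt_mul_le_sqrt_mul_sqrt {α : Type*} [MeasurableSpace α] {μ : Measure α}
    {f g : α → ℝ} (hf0 : 0 ≤ᵐ[μ] f) (hg0 : 0 ≤ᵐ[μ] g) (hf : Integrable f μ)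
    (hg : Integrable g μ) :
    ∫ x, √(f x * g x) ∂μ ≤ √(∫ x, f x ∂μ) * √(∫ x, g x ∂μ) := by
  have memLp_sqrt : ∀ {h : α → ℝ}, 0 ≤ᵐ[μ] h → Integrable h μ →
      MemLp (fun x => √(h x)) (ENNReal.ofReal 2) μ := by
    intro h h0 hi
    have hm : AEStronglyMeasurable (fun x => √(h x)) μ :=
      Real.continuous_sqrt.comp_aestronglyMeasurable hi.aestronglyMeasurable
    rw [ENNReal.ofReal_ofNat, memLp_two_iff_integrable_sq hm]
    exact hi.congr (h0.mono fun x hx => (Real.sq_sqrt hx).symm)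
  have holder := integral_mul_le_Lp_mul_Lq_of_nonneg Real.HolderConjugate.two_two
    (ae_of_all μ fun x => Real.sqrt_nonneg (f x)) (ae_of_all μ fun x => Real.sqrt_nonneg (g x))
    (memLp_sqrt hf0 hf) (memLp_sqrt hg0 hg)
  have sq_sqrt_ae : ∀ {h : α → ℝ}, 0 ≤ᵐ[μ] h →
      ∫ x, √(h x) ^ (2 : ℝ) ∂μ = ∫ x, h x ∂μ :=
    fun h0 => integral_congr_ae (h0.mono fun x hx => by
      simp only [Real.rpow_two, Real.sq_sqrt hx])
  rw [sq_sqrt_ae hf0, sq_sqrt_ae hg0, ← Real.sqrt_eq_rpow, ← Real.sqrt_eq_rpow] at holder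
  refine le_of_eq_of_le (integral_congr_ae (hf0.mono fun x hx => ?_)) holder
  exact Real.sqrt_mul hx (g x)

theorem intervalIntegral.integral_sqrt_mul_le_sqrt_mul_sqrt {f g : ℝ → ℝ} {a b : ℝ}
    (hab : a ≤ b) (hf0 : ∀ x ∈ Ioc a b, 0 ≤ f x) (hg0 : ∀ x ∈ Ioc a b, 0 ≤ g x)
    (hf : IntervalIntegrable f volume a b) (hg : IntervalIntegrable g volume a b) :
    ∫ x in a..b, √(f x * g x) ≤ √(∫ x in a..b, f x) * √(∫ x in a..b, g x) := by
  simp only [intervalIntegral.integral_of_le hab]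
  exact _root_.integral_sqrt_mul_le_sqrt_mul_sqrt
    (ae_restrict_of_forall_mem measurableSet_Ioc hf0)
    (ae_restrict_of_forall_mem measurableSet_Ioc hg0) hf.1 hg.1

theorem exists_mem_Icc_integral_eq_mul {f : ℝ → ℝ} {a b : ℝ} (hab : a < b)
    (hf : ContinuousOn f (Icc a b)) : ∃ c ∈ Icc a b, ∫ x in a..b, f x = (b - a) * f c := by
  obtain ⟨c, hc, hmean⟩ := exists_eq_interval_average hab.ne (by rwa [uIcc_of_le hab.le])
  rw [interval_average_eq_div, eq_div_iff (sub_ne_zero.2 hab.ne')] at hmean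
  rw [uIoo_of_le hab.le] at hc
  exact ⟨c, Ioo_subset_Icc_self hc, by rw [← hmean, mul_comm]⟩

theorem abs_sub_le_integral_abs_deriv {g g' : ℝ → ℝ} {a b x y : ℝ}
    (hg : ∀ t ∈ Icc a b, HasDerivWithinAt g (g' t) (Icc a b) t)
    (hg' : ContinuousOn g' (Icc a b))
    (hx : x ∈ Icc a b) (hy : y ∈ Icc a b) :
    |g y - g x| ≤ ∫ t in a..b, |g' t| := by
  wlog hxy : x ≤ y generalizing x y
  · rw [abs_sub_comm]; exact this hy hx (le_of_not_ge hxy)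
  have hsub : Icc x y ⊆ Icc a b := Icc_subset_Icc hx.1 hy.2
  have ftc : ∫ t in x..y, g' t = g y - g x :=
    intervalIntegral.integral_eq_sub_of_hasDerivAt_of_le hxy
      (fun t ht => (hg t (hsub ht)).continuousWithinAt.mono hsub)
      (fun t ht => (hg t (hsub (Ioo_subset_Icc_self ht))).hasDerivAt
        (Icc_mem_nhds (hx.1.trans_lt ht.1) (ht.2.trans_le hy.2)))
      ((hg'.mono hsub).intervalIntegrable_of_Icc hxy)
  rw [← ftc]
  calc |∫ t in x..y, g' t| ≤ ∫ t in x..y, |g' t| :=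
        intervalIntegral.abs_integral_le_integral_abs hxy
    _ ≤ ∫ t in a..b, |g' t| :=
        intervalIntegral.integral_mono_interval hx.1 hxy hy.2 (ae_of_all _ fun t => abs_nonneg _)
          (hg'.abs.intervalIntegrable_of_Icc (hx.1.trans (hxy.trans hy.2)))

theorem abs_mul_mul_rpow_eq_mul_sqrt {β d t w : ℝ} (hβ : -1 ≤ β) (ht : 0 < t) (hw : 0 < w) :
    |d * ((β + 1) / 2) * t ^ ((β + 1) / 2 - 1)| =
      (β + 1) / 2 * √(t ^ (β - 2) * d ^ 2 / w * (t * w)) := by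
  have hsq : t ^ (β - 2) * d ^ 2 / w * (t * w) = (t ^ ((β + 1) / 2 - 1) * |d|) ^ 2 := by
    have hpow : (t ^ ((β + 1) / 2 - 1)) ^ 2 = t ^ (β - 2) * t := by
      rw [← Real.rpow_mul_natCast ht.le, ← Real.rpow_add_one ht.ne']
      ring_nf
    rw [mul_pow, sq_abs, hpow]
    field_simp
  rw [hsq, Real.sqrt_sq (by positivity), abs_mul, abs_mul,
    abs_of_nonneg (by linarith : 0 ≤ (β + 1) / 2), abs_of_pos (Real.rpow_pos_of_pos ht _)]
  ring

/-- pointwise oscillation estimate for `θ^{(β+1)/2}`. -/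
theorem oscillation_estimate
    (β : ℝ) (hβ : 0 ≤ β) (θ θ' v : ℝ → ℝ)
    (hθpos : ∀ x ∈ Icc (0:ℝ) 1, 0 < θ x)
    (hθ' : ∀ x ∈ Icc (0:ℝ) 1, HasDerivWithinAt θ (θ' x) (Icc 0 1) x)
    (hθ'c : ContinuousOn θ' (Icc 0 1))
    (hvpos : ∀ x ∈ Icc (0:ℝ) 1, 0 < v x)
    (hvc : ContinuousOn v (Icc 0 1)) :
    ∀ x ∈ Icc (0:ℝ) 1,
      |θ x ^ ((β + 1) / 2) - (∫ y in (0:ℝ)..1, θ y) ^ ((β + 1) / 2)| ≤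
        ((β + 1) / 2) * Real.sqrt (∫ y in (0:ℝ)..1, θ y ^ (β - 2) * (θ' y) ^ 2 / v y) *
          Real.sqrt (∫ y in (0:ℝ)..1, θ y * v y) := by
  intro x hx
  set e := (β + 1) / 2
  have hθc : ContinuousOn θ (Icc 0 1) := fun y hy => (hθ' y hy).continuousWithinAt
  have hθrpow : ∀ r : ℝ, ContinuousOn (fun y => θ y ^ r) (Icc 0 1) := fun r =>
    hθc.rpow_const fun y hy => Or.inl (hθpos y hy).ne'
  obtain ⟨c, hc, hθc_mean⟩ := exists_mem_Icc_integral_eq_mul zero_lt_one hθc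
  rw [sub_zero, one_mul] at hθc_mean
  have hderiv : ∀ y ∈ Icc (0:ℝ) 1,
      HasDerivWithinAt (fun y => θ y ^ e) (θ' y * e * θ y ^ (e - 1)) (Icc 0 1) y :=
    fun y hy => (hθ' y hy).rpow_const (Or.inl (hθpos y hy).ne')
  have hA : ContinuousOn (fun y => θ y ^ (β - 2) * θ' y ^ 2 / v y) (Icc 0 1) :=
    ((hθrpow _).mul (hθ'c.pow 2)).div hvc fun y hy => (hvpos y hy).ne'
  have hB : ContinuousOn (fun y => θ y * v y) (Icc 0 1) := hθc.mul hvc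
  have hA0 : ∀ y ∈ Icc (0:ℝ) 1, 0 ≤ θ y ^ (β - 2) * θ' y ^ 2 / v y := fun y hy =>
    div_nonneg (mul_nonneg (Real.rpow_pos_of_pos (hθpos y hy) _).le (sq_nonneg _)) (hvpos y hy).le
  calc |θ x ^ e - (∫ y in (0:ℝ)..1, θ y) ^ e| = |θ x ^ e - θ c ^ e| := by rw [hθc_mean]
    _ ≤ ∫ y in (0:ℝ)..1, |θ' y * e * θ y ^ (e - 1)| :=
        abs_sub_le_integral_abs_deriv hderiv
          ((hθ'c.mul continuousOn_const).mul (hθrpow _)) hc hx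
    _ = e * ∫ y in (0:ℝ)..1, √(θ y ^ (β - 2) * θ' y ^ 2 / v y * (θ y * v y)) := by
        rw [← intervalIntegral.integral_const_mul]
        refine intervalIntegral.integral_congr fun y hy => ?_
        rw [uIcc_of_le zero_le_one] at hy
        exact abs_mul_mul_rpow_eq_mul_sqrt (by linarith) (hθpos y hy) (hvpos y hy)
    _ ≤ e * (√(∫ y in (0:ℝ)..1, θ y ^ (β - 2) * θ' y ^ 2 / v y) *
          √(∫ y in (0:ℝ)..1, θ y * v y)) := by
        gcongr
        exact intervalIntegral.integral_sqrt_mul_le_sqrt_mul_sqrt zero_le_one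
          (fun y hy => hA0 y (Ioc_subset_Icc_self hy))
          (fun y hy => (mul_pos (hθpos y (Ioc_subset_Icc_self hy))
            (hvpos y (Ioc_subset_Icc_self hy))).le)
          (hA.intervalIntegrable_of_Icc zero_le_one) (hB.intervalIntegrable_of_Icc zero_le_one)
    _ = _ := by rw [mul_assoc]
end
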